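/- Let x₀ ∈ ℝ, α > 1, and 0 < T* < (α − 1)/(α(1 + α|x₀|)). Define recursively the continuous functions g₀ ≡ 1 on [0,T*] and g_{n+1}(t) = 1 + ∫₀ᵗ g_n(s) ds − x₀ ∫₀ᵗ max_{η∈[0,s]} (g_n(η))² ds. Then for every n ∈ ℕ and every t ∈ [0,T*] one has |g_{n+1}(t) − g_n(t)| ≤ (|1 − x₀|/(1 + 2α|x₀|)) · (1 + 2α|x₀|)^{n+1} t^{n+1} / (n+1)!. -/

import Mathlib

/-!
As long as `|f| ≤ α` on `[0,T]`, the Picard step `f ↦ 1 + ∫₀ᵗ f − x₀ ∫₀ᵗ max_{[0,s]} f²` stays in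
the same ball, since `1 + α(1 + α|x₀|)T ≤ α`. On that ball the running maximum of `f²` moves by at
most `2α‖f − h‖`, because a supremum is `1`-Lipschitz for the sup norm and `|a² − b²| ≤ 2α|a − b|`.
So each step multiplies a bound `c sᵏ` on the difference of two iterates by `1 + 2α|x₀|` and
integrates it, which produces the factorials exactly as in the linear Picard iteration.
-/

open Set intervalIntegral

noncomputable section

section Supremum

variable {ι : Type*} {S : Set ι} {f h : ι → ℝ} {c : ℝ}

theorem csSup_image_le_csSup_image_add (hS : S.Nonempty) (hh : BddAbove (h '' S))
    (hfh : ∀ x ∈ S, f x ≤ h x + c) : sSup (f '' S) ≤ sSup (h '' S) + c :=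
  csSup_le (hS.image f) <| forall_mem_image.2 fun x hx =>
    (hfh x hx).trans <| add_le_add_left (le_csSup hh (mem_image_of_mem h hx)) c

theorem abs_csSup_image_sub_csSup_image_le (hS : S.Nonempty) (hf : BddAbove (f '' S))
    (hh : BddAbove (h '' S)) (hfh : ∀ x ∈ S, |f x - h x| ≤ c) :
    |sSup (f '' S) - sSup (h '' S)| ≤ c := by
  have hle := csSup_image_le_csSup_image_add (f := f) (c := c) hS hh fun x hx => by
    linarith [(abs_le.1 (hfh x hx)).2]
  have hge := csSup_image_le_csSup_image_add (f := h) (c := c) hS hf fun x hx => by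
    linarith [(abs_le.1 (hfh x hx)).1]
  exact abs_sub_le_iff.2 ⟨by linarith, by linarith⟩

theorem abs_csSup_image_le (hS : S.Nonempty) (hf : ∀ x ∈ S, |f x| ≤ c) :
    |sSup (f '' S)| ≤ c := by
  obtain ⟨x, hx⟩ := hS
  have hbdd : BddAbove (f '' S) := ⟨c, forall_mem_image.2 fun y hy => (abs_le.1 (hf y hy)).2⟩
  refine abs_le.2 ⟨?_, csSup_le ⟨f x, mem_image_of_mem f hx⟩ <|
    forall_mem_image.2 fun y hy => (abs_le.1 (hf y hy)).2⟩
  exact (abs_le.1 (hf x hx)).1.trans (le_csSup hbdd (mem_image_of_mem f hx))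

end Supremum

def runningMax (f : ℝ → ℝ) (s : ℝ) : ℝ := sSup (f '' Icc 0 s)

theorem runningMax_monotoneOn {f : ℝ → ℝ} {T : ℝ} (hf : BddAbove (f '' Icc 0 T)) :
    MonotoneOn (runningMax f) (Icc 0 T) := fun _ hs _ hs' hss' =>
  csSup_le_csSup (hf.mono (image_mono (Icc_subset_Icc le_rfl hs'.2)))
    ((nonempty_Icc.2 hs.1).image f) (image_mono (Icc_subset_Icc le_rfl hss'))

theorem abs_integral_le_mul_pow {u : ℝ → ℝ} {c t : ℝ} {k : ℕ} (ht : 0 ≤ t)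
    (hu : ∀ s ∈ Ioc 0 t, |u s| ≤ c * s ^ k) :
    |∫ s in (0:ℝ)..t, u s| ≤ c * t ^ (k + 1) / (k + 1) := by
  have hint : ∫ s in (0:ℝ)..t, c * s ^ k = c * t ^ (k + 1) / (k + 1) := by
    rw [integral_const_mul, integral_pow]
    ring
  rw [← hint]
  exact norm_integral_le_of_norm_le (f := u) (g := fun s => c * s ^ k) ht
    (MeasureTheory.ae_of_all _ hu)
    ((continuous_const.mul (continuous_pow k)).intervalIntegrable _ _)

def picardStep (x₀ : ℝ) (f : ℝ → ℝ) (t : ℝ) : ℝ :=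
  1 + (∫ s in (0:ℝ)..t, f s) - x₀ * ∫ s in (0:ℝ)..t, runningMax (fun η => f η ^ 2) s

section PicardStep

variable {x₀ α T t : ℝ} {f h : ℝ → ℝ}

theorem picardStep_of_eqOn_one (hf : EqOn f 1 (Icc 0 T)) (ht : t ∈ Icc 0 T) :
    picardStep x₀ f t = 1 + (1 - x₀) * t := by
  have hsub : ∀ s ∈ uIcc 0 t, s ∈ Icc 0 T := by
    rw [uIcc_of_le ht.1]
    exact fun s hs => ⟨hs.1, hs.2.trans ht.2⟩
  have hmax : ∀ s ∈ uIcc 0 t, runningMax (fun η => f η ^ 2) s = 1 := by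
    intro s hs
    have hs' := hsub s hs
    have : EqOn (fun η => f η ^ 2) (fun _ => 1) (Icc 0 s) := fun η hη => by
      simp [hf ⟨hη.1, hη.2.trans hs'.2⟩]
    rw [runningMax, this.image_eq, (nonempty_Icc.2 hs'.1).image_const, csSup_singleton]
  rw [picardStep, integral_congr fun s hs => hf (hsub s hs), integral_congr hmax]
  simp only [Pi.one_apply, integral_const, sub_zero, smul_eq_mul, mul_one]
  ring

theorem abs_picardStep_le (hfα : ∀ s ∈ Icc 0 T, |f s| ≤ α) (ht : t ∈ Icc 0 T) :
    |picardStep x₀ f t| ≤ 1 + α * (1 + α * |x₀|) * t := by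
  have hmem : ∀ s ∈ Ioc 0 t, s ∈ Icc 0 T := fun s hs => ⟨hs.1.le, hs.2.trans ht.2⟩
  have hf : |∫ s in (0:ℝ)..t, f s| ≤ α * t := by
    simpa using abs_integral_le_mul_pow (k := 0) ht.1 fun s hs => by
      simpa using hfα s (hmem s hs)
  have hmaxBound : ∀ s ∈ Ioc 0 t, |runningMax (fun η => f η ^ 2) s| ≤ α ^ 2 * s ^ 0 := by
    intro s hs
    have hs := hmem s hs
    rw [pow_zero, mul_one]
    refine abs_csSup_image_le (nonempty_Icc.2 hs.1) fun η hη => ?_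
    rw [abs_pow]
    exact pow_le_pow_left₀ (abs_nonneg _) (hfα η ⟨hη.1, hη.2.trans hs.2⟩) 2
  have hmax : |∫ s in (0:ℝ)..t, runningMax (fun η => f η ^ 2) s| ≤ α ^ 2 * t := by
    simpa using abs_integral_le_mul_pow ht.1 hmaxBound
  calc |picardStep x₀ f t|
      ≤ 1 + |∫ s in (0:ℝ)..t, f s|
        + |x₀| * |∫ s in (0:ℝ)..t, runningMax (fun η => f η ^ 2) s| := by
        rw [picardStep, ← abs_mul]
        refine (abs_sub _ _).trans ?_
        linarith [abs_add_le 1 (∫ s in (0:ℝ)..t, f s), abs_one (α := ℝ)]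
    _ ≤ 1 + α * t + |x₀| * (α ^ 2 * t) := by gcongr
    _ = 1 + α * (1 + α * |x₀|) * t := by ring

theorem abs_picardStep_sub_le {c : ℝ} {k : ℕ} (hf : ContinuousOn f (Icc 0 T))
    (hh : ContinuousOn h (Icc 0 T)) (hfα : ∀ s ∈ Icc 0 T, |f s| ≤ α)
    (hhα : ∀ s ∈ Icc 0 T, |h s| ≤ α) (hc : 0 ≤ c) (hfh : ∀ s ∈ Icc 0 T, |f s - h s| ≤ c * s ^ k)
    (ht : t ∈ Icc 0 T) :
    |picardStep x₀ f t - picardStep x₀ h t| ≤ (1 + 2 * α * |x₀|) * c * t ^ (k + 1) / (k + 1) := by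
  have hα : 0 ≤ α := (abs_nonneg _).trans (hfα 0 ⟨le_rfl, ht.1.trans ht.2⟩)
  have htT : uIcc 0 t ⊆ Icc 0 T := by
    rw [uIcc_of_le ht.1]
    exact Icc_subset_Icc le_rfl ht.2
  have hbdd : ∀ {u : ℝ → ℝ}, ContinuousOn u (Icc 0 T) → ∀ {s}, s ≤ T →
      BddAbove ((fun η => u η ^ 2) '' Icc 0 s) := fun hu _ hs =>
    isCompact_Icc.bddAbove_image ((hu.pow 2).mono (Icc_subset_Icc le_rfl hs))
  have hsq : ∀ s ∈ Icc 0 T, |f s ^ 2 - h s ^ 2| ≤ 2 * α * |f s - h s| := by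
    intro s hs
    rw [sq_sub_sq, abs_mul]
    gcongr
    linarith [abs_add_le (f s) (h s), hfα s hs, hhα s hs]
  have hmax : ∀ s ∈ Ioc 0 t,
      |runningMax (fun η => f η ^ 2) s - runningMax (fun η => h η ^ 2) s| ≤ 2 * α * c * s ^ k := by
    intro s hs
    have hsT : s ≤ T := hs.2.trans ht.2
    refine abs_csSup_image_sub_csSup_image_le (nonempty_Icc.2 hs.1.le) (hbdd hf hsT)
      (hbdd hh hsT) fun η hη => ?_
    calc |f η ^ 2 - h η ^ 2| ≤ 2 * α * |f η - h η| := hsq η ⟨hη.1, hη.2.trans hsT⟩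
      _ ≤ 2 * α * (c * η ^ k) := by gcongr; exact hfh η ⟨hη.1, hη.2.trans hsT⟩
      _ ≤ 2 * α * c * s ^ k := by rw [← mul_assoc]; gcongr; exacts [hη.1, hη.2]
  have hmaxIntegrable : ∀ {u : ℝ → ℝ}, ContinuousOn u (Icc 0 T) →
      IntervalIntegrable (runningMax (fun η => u η ^ 2)) MeasureTheory.volume 0 t := fun hu =>
    ((runningMax_monotoneOn (hbdd hu le_rfl)).mono htT).intervalIntegrable
  have hdiff : picardStep x₀ f t - picardStep x₀ h t =
      (∫ s in (0:ℝ)..t, f s - h s) - x₀ * ∫ s in (0:ℝ)..t,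
        (runningMax (fun η => f η ^ 2) s - runningMax (fun η => h η ^ 2) s) := by
    rw [picardStep, picardStep, integral_sub ((hf.mono htT).intervalIntegrable)
      ((hh.mono htT).intervalIntegrable), integral_sub (hmaxIntegrable hf) (hmaxIntegrable hh)]
    ring
  have hfhIntegral := abs_integral_le_mul_pow ht.1 fun s hs => hfh s ⟨hs.1.le, hs.2.trans ht.2⟩
  have hmaxIntegral := abs_integral_le_mul_pow ht.1 hmax
  rw [hdiff]
  calc _ ≤ |∫ s in (0:ℝ)..t, f s - h s| + |x₀| * |∫ s in (0:ℝ)..t,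
          (runningMax (fun η => f η ^ 2) s - runningMax (fun η => h η ^ 2) s)| := by
        rw [← abs_mul]
        exact abs_sub _ _
    _ ≤ c * t ^ (k + 1) / (k + 1) + |x₀| * (2 * α * c * t ^ (k + 1) / (k + 1)) := by gcongr
    _ = (1 + 2 * α * |x₀|) * c * t ^ (k + 1) / (k + 1) := by ring

end PicardStep

section Iterates

variable {x₀ α T : ℝ} {g : ℕ → ℝ → ℝ}

theorem abs_picardIterate_le (hα : 1 ≤ α) (hT : 1 + α * (1 + α * |x₀|) * T ≤ α)
    (hg0 : ∀ t ∈ Icc 0 T, g 0 t = 1)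
    (hgrec : ∀ n, ∀ t ∈ Icc 0 T, g (n + 1) t = picardStep x₀ (g n) t) :
    ∀ n, ∀ t ∈ Icc 0 T, |g n t| ≤ α := by
  have hα0 : 0 ≤ α * (1 + α * |x₀|) := by positivity
  intro n
  induction n with
  | zero => intro t ht; rwa [hg0 t ht, abs_one]
  | succ n ih =>
    intro t ht
    calc |g (n + 1) t| ≤ 1 + α * (1 + α * |x₀|) * t := hgrec n t ht ▸ abs_picardStep_le ih ht
      _ ≤ 1 + α * (1 + α * |x₀|) * T := by gcongr; exact ht.2
      _ ≤ α := hT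

theorem abs_picardIterate_succ_sub_le (hgc : ∀ n, ContinuousOn (g n) (Icc 0 T))
    (hgα : ∀ n, ∀ t ∈ Icc 0 T, |g n t| ≤ α) (hg0 : ∀ t ∈ Icc 0 T, g 0 t = 1)
    (hgrec : ∀ n, ∀ t ∈ Icc 0 T, g (n + 1) t = picardStep x₀ (g n) t) :
    ∀ n, ∀ t ∈ Icc 0 T, |g (n + 1) t - g n t| ≤
      |1 - x₀| * (1 + 2 * α * |x₀|) ^ n / (n + 1).factorial * t ^ (n + 1) := by
  intro n
  induction n with
  | zero =>
    intro t ht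
    rw [hgrec 0 t ht, picardStep_of_eqOn_one hg0 ht, hg0 t ht]
    simp [abs_mul, abs_of_nonneg ht.1]
  | succ n ih =>
    intro t ht
    have hα : 0 ≤ α := (abs_nonneg _).trans (hgα 0 0 ⟨le_rfl, ht.1.trans ht.2⟩)
    rw [hgrec (n + 1) t ht, hgrec n t ht]
    refine (abs_picardStep_sub_le (hgc _) (hgc _) (hgα _) (hgα _) (by positivity) ih ht).trans_eq ?_
    rw [Nat.factorial_succ (n + 1)]
    push_cast
    field_simp
    ring

end Iterates

theorem picard_iterates_cauchy_estimate_general (x₀ α T : ℝ) (hα : 1 < α)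
    (hT' : T < (α - 1) / (α * (1 + α * |x₀|)))
    (g : ℕ → ℝ → ℝ)
    (hgc : ∀ n, ContinuousOn (g n) (Set.Icc 0 T))
    (hg0 : ∀ t ∈ Set.Icc (0:ℝ) T, g 0 t = 1)
    (hgrec : ∀ n, ∀ t ∈ Set.Icc (0:ℝ) T, g (n + 1) t =
      1 + (∫ s in (0:ℝ)..t, g n s)
        - x₀ * ∫ s in (0:ℝ)..t, sSup ((fun η => (g n η) ^ 2) '' Set.Icc 0 s)) :
    ∀ n, ∀ t ∈ Set.Icc (0:ℝ) T, |g (n + 1) t - g n t| ≤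
      (|1 - x₀| / (1 + 2 * α * |x₀|)) * (1 + 2 * α * |x₀|) ^ (n + 1) * t ^ (n + 1)
        / (Nat.factorial (n + 1)) := by
  have hα0 : 0 < α := zero_lt_one.trans hα
  have hstep : 1 + α * (1 + α * |x₀|) * T ≤ α := by
    have := (lt_div_iff₀ (by positivity)).1 hT'
    linarith
  have hgα := abs_picardIterate_le hα.le hstep hg0 hgrec
  intro n t ht
  refine (abs_picardIterate_succ_sub_le hgc hgα hg0 hgrec n t ht).trans_eq ?_
  field_simp
  ring

/-- Estimate on successive differences of the Picard iterates
`g₀ ≡ 1`, `g_{n+1}(t) = 1 + ∫₀ᵗ g_n − x₀ ∫₀ᵗ max_{[0,s]} g_n²` on `[0,T*]`: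
`|g_{n+1}(t) − g_n(t)| ≤ (|1−x₀|/(1+2α|x₀|)) (1+2α|x₀|)^{n+1} t^{n+1}/(n+1)!`. -/
theorem picard_iterates_cauchy_estimate (x₀ α T : ℝ) (hα : 1 < α)
    (hT : 0 < T) (hT' : T < (α - 1) / (α * (1 + α * |x₀|)))
    (g : ℕ → ℝ → ℝ)
    (hgc : ∀ n, ContinuousOn (g n) (Set.Icc 0 T))
    (hg0 : ∀ t ∈ Set.Icc (0:ℝ) T, g 0 t = 1)
    (hgrec : ∀ n, ∀ t ∈ Set.Icc (0:ℝ) T, g (n + 1) t =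
      1 + (∫ s in (0:ℝ)..t, g n s)
        - x₀ * ∫ s in (0:ℝ)..t, sSup ((fun η => (g n η) ^ 2) '' Set.Icc 0 s)) :
    ∀ n, ∀ t ∈ Set.Icc (0:ℝ) T, |g (n + 1) t - g n t| ≤
      (|1 - x₀| / (1 + 2 * α * |x₀|)) * (1 + 2 * α * |x₀|) ^ (n + 1) * t ^ (n + 1)
        / (Nat.factorial (n + 1)) :=
  picard_iterates_cauchy_estimate_general x₀ α T hα hT' g hgc hg0 hgrec
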